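/- arXiv:math/0207062 — 3 statements merged into one kernel-verified Lean document; each statement's English description precedes it below -/
import Mathlib

section
/- Let I be a bending set on a finite set E. Then I is full if and only if for every A ∈ I, the number of elements I' ∈ I with I' ⊆ A equals 2|A| − 1. -/
open Finset

/-- `I` is lopsided for the length function `lam`. -/
def Lopsided {α : Type*} [DecidableEq α] (lam : α → ℝ) (I : Finset α) : Prop :=
  ∃ e₀ ∈ I, lam e₀ > ∑ e ∈ I.erase e₀, lam e

/-- `ℐ` is a bending set on the finite set `α` for `lam`. -/
def IsBendingSet {α : Type*} [Fintype α] [DecidableEq α]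
    (lam : α → ℝ) (ℐ : Finset (Finset α)) : Prop :=
  (∀ A ∈ ℐ, Lopsided lam A) ∧ (∀ e : α, ({e} : Finset α) ∈ ℐ) ∧
    (∀ A ∈ ℐ, ∀ B ∈ ℐ, A ∩ B = ∅ ∨ A ⊆ B ∨ B ⊆ A)

/-- A bending set is full iff every non-singleton member is the disjoint union of
two members. -/
def IsFull {α : Type*} [DecidableEq α] (ℐ : Finset (Finset α)) : Prop :=
  ∀ A ∈ ℐ, 1 < A.card →
    ∃ A₁ ∈ ℐ, ∃ A₂ ∈ ℐ, A₁ ∩ A₂ = ∅ ∧ A = A₁ ∪ A₂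

section Aux

variable {α : Type*} [Fintype α] [DecidableEq α] {lam : α → ℝ} {ℐ : Finset (Finset α)}

lemma bend_nonempty (hbend : IsBendingSet lam ℐ) {A : Finset α} (hA : A ∈ ℐ) :
    A.Nonempty := by
  obtain ⟨e, he, -⟩ := hbend.1 A hA
  exact ⟨e, he⟩

lemma filter_subset_insert (ℐ : Finset (Finset α)) (T : Finset α) :
    ℐ.filter (· ⊆ T) ⊆ insert T (ℐ.filter (· ⊂ T)) := by
  intro C hC
  rw [mem_filter] at hC
  rcases eq_or_ne C T with h | h
  · exact mem_insert.mpr (Or.inl h)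
  · exact mem_insert.mpr (Or.inr (mem_filter.mpr ⟨hC.1, lt_of_le_of_ne hC.2 h⟩))

lemma max_member_split (hbend : IsBendingSet lam ℐ) {S B : Finset α}
    (hBI : B ∈ ℐ) (hBmax : ∀ C ∈ ℐ.filter (· ⊂ S), C.card ≤ B.card) :
    ℐ.filter (· ⊂ S) ⊆ ℐ.filter (· ⊆ B) ∪ ℐ.filter (· ⊆ S \ B) := by
  intro C hC
  have hC' := hC
  rw [mem_filter] at hC'
  obtain ⟨hCI, hCS⟩ := hC'
  rcases hbend.2.2 C hCI B hBI with h | h | h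
  · refine mem_union_right _ (mem_filter.mpr ⟨hCI, ?_⟩)
    exact subset_sdiff.mpr ⟨hCS.subset, disjoint_iff_inter_eq_empty.mpr h⟩
  · exact mem_union_left _ (mem_filter.mpr ⟨hCI, h⟩)
  · have hCB : C = B := (eq_of_subset_of_card_le h (hBmax C hC)).symm
    exact mem_union_left _ (mem_filter.mpr ⟨hCI, hCB.le⟩)

/-- Classic laminar counting: number of members strictly inside `S` is at most `2|S| - 2`. -/
lemma ssubset_count_le (hbend : IsBendingSet lam ℐ) :
    ∀ n (S : Finset α), S.card ≤ n → (ℐ.filter (· ⊂ S)).card ≤ 2 * S.card - 2 := by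
  intro n
  induction n with
  | zero =>
    intro S hS
    have hS0 : S = ∅ := card_eq_zero.mp (Nat.le_zero.mp hS)
    subst hS0
    have : ℐ.filter (· ⊂ (∅ : Finset α)) = ∅ := by
      apply filter_eq_empty_iff.mpr
      intro C _ h
      exact absurd h (by simp)
    simp [this]
  | succ n ih =>
    intro S hS
    by_cases hfe : (ℐ.filter (· ⊂ S)).Nonempty
    · obtain ⟨B, hBmem, hBmax⟩ := exists_max_image _ Finset.card hfe
      have hBmem' := hBmem
      rw [mem_filter] at hBmem'
      obtain ⟨hBI, hBS⟩ := hBmem'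
      have hBne : B.Nonempty := bend_nonempty hbend hBI
      have hb1 : 1 ≤ B.card := hBne.card_pos
      have hblt : B.card < S.card := card_lt_card hBS
      have hsd : (S \ B).card = S.card - B.card := card_sdiff_of_subset hBS.subset
      have hsub := max_member_split hbend hBI hBmax
      have h1 : (ℐ.filter (· ⊆ B)).card ≤ 2 * B.card - 1 := by
        have := card_le_card (filter_subset_insert ℐ B)
        have h2 := ih B (by omega)
        have := card_insert_le B (ℐ.filter (· ⊂ B))
        omega
      have h2 : (ℐ.filter (· ⊆ S \ B)).card ≤ 2 * (S \ B).card - 1 := by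
        have := card_le_card (filter_subset_insert ℐ (S \ B))
        have h2 := ih (S \ B) (by omega)
        have := card_insert_le (S \ B) (ℐ.filter (· ⊂ (S \ B)))
        omega
      have htot : (ℐ.filter (· ⊂ S)).card ≤
          (ℐ.filter (· ⊆ B)).card + (ℐ.filter (· ⊆ S \ B)).card :=
        le_trans (card_le_card hsub) (card_union_le _ _)
      omega
    · rw [not_nonempty_iff_eq_empty] at hfe
      simp [hfe]

end Aux

/-- A bending set `ℐ` is full iff for every `A ∈ ℐ` the number of members of `ℐ`
contained in `A` is `2|A| - 1`. -/
theorem full_iff_count {α : Type*} [Fintype α] [DecidableEq α]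
    (lam : α → ℝ) (hpos : ∀ e : α, 0 < lam e)
    (ℐ : Finset (Finset α)) (hbend : IsBendingSet lam ℐ) :
    IsFull ℐ ↔ ∀ A ∈ ℐ, (ℐ.filter (· ⊆ A)).card = 2 * A.card - 1 := by
  have hne : ∀ A ∈ ℐ, A.Nonempty := fun A hA => bend_nonempty hbend hA
  constructor
  · intro hfull
    have key : ∀ n (A : Finset α), A ∈ ℐ → A.card ≤ n →
        (ℐ.filter (· ⊆ A)).card = 2 * A.card - 1 := by
      intro n
      induction n with
      | zero =>
        intro A hA h0
        exact absurd (hne A hA).card_pos (by omega)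
      | succ n ih =>
        intro A hA hAn
        rcases Nat.lt_or_ge 1 A.card with h1 | h1
        · -- split case
          obtain ⟨A₁, hA₁, A₂, hA₂, hdisj, hunion⟩ := hfull A hA h1
          have hd : Disjoint A₁ A₂ := disjoint_iff_inter_eq_empty.mpr hdisj
          have hc : A.card = A₁.card + A₂.card := by
            rw [hunion, card_union_of_disjoint hd]
          have hc1 : 0 < A₁.card := (hne _ hA₁).card_pos
          have hc2 : 0 < A₂.card := (hne _ hA₂).card_pos
          have hA1A : A₁ ⊆ A := hunion ▸ subset_union_left
          have hA2A : A₂ ⊆ A := hunion ▸ subset_union_right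
          have hset : ℐ.filter (· ⊆ A) =
              (ℐ.filter (· ⊆ A₁) ∪ ℐ.filter (· ⊆ A₂)) ∪ {A} := by
            ext C
            simp only [mem_filter, mem_union, mem_singleton]
            constructor
            · rintro ⟨hCI, hCA⟩
              rcases hbend.2.2 C hCI A₁ hA₁ with h | h | h
              · -- C disjoint from A₁ ⇒ C ⊆ A₂
                refine Or.inl (Or.inr ⟨hCI, fun x hx => ?_⟩)
                have hxA : x ∈ A := hCA hx
                rw [hunion, mem_union] at hxA
                rcases hxA with hx1 | hx2
                · exact absurd (mem_inter.mpr ⟨hx, hx1⟩) (by simp [h])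
                · exact hx2
              · exact Or.inl (Or.inl ⟨hCI, h⟩)
              · rcases hbend.2.2 C hCI A₂ hA₂ with h2 | h2 | h2
                · -- C disjoint from A₂, contains A₁ ⇒ C = A₁
                  refine Or.inl (Or.inl ⟨hCI, fun x hx => ?_⟩)
                  have hxA : x ∈ A := hCA hx
                  rw [hunion, mem_union] at hxA
                  rcases hxA with hx1 | hx2
                  · exact hx1
                  · exact absurd (mem_inter.mpr ⟨hx, hx2⟩) (by simp [h2])
                · -- A₁ ⊆ C ⊆ A₂ contradicts disjoint & nonempty
                  exfalso
                  obtain ⟨e, he⟩ := hne _ hA₁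
                  have : e ∈ A₁ ∩ A₂ := mem_inter.mpr ⟨he, h2 (h he)⟩
                  simp [hdisj] at this
                · -- A₁ ⊆ C, A₂ ⊆ C ⇒ C = A
                  exact Or.inr (subset_antisymm hCA (hunion ▸ union_subset h h2))
            · rintro ((⟨hCI, hCA⟩ | ⟨hCI, hCA⟩) | h)
              · exact ⟨hCI, hCA.trans hA1A⟩
              · exact ⟨hCI, hCA.trans hA2A⟩
              · exact ⟨h ▸ hA, h ▸ subset_rfl⟩
          have hd12 : Disjoint (ℐ.filter (· ⊆ A₁)) (ℐ.filter (· ⊆ A₂)) := by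
            rw [disjoint_left]
            intro C hC1 hC2
            rw [mem_filter] at hC1 hC2
            obtain ⟨e, he⟩ := hne C hC1.1
            have : e ∈ A₁ ∩ A₂ := mem_inter.mpr ⟨hC1.2 he, hC2.2 he⟩
            simp [hdisj] at this
          have hdA : Disjoint (ℐ.filter (· ⊆ A₁) ∪ ℐ.filter (· ⊆ A₂)) ({A} : Finset (Finset α)) := by
            rw [disjoint_right]
            intro C hC hC'
            rw [mem_singleton] at hC
            subst hC
            rw [mem_union, mem_filter, mem_filter] at hC'
            rcases hC' with ⟨-, h⟩ | ⟨-, h⟩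
            · have := card_le_card h; omega
            · have := card_le_card h; omega
          have e1 : (ℐ.filter (· ⊆ A₁)).card = 2 * A₁.card - 1 := ih A₁ hA₁ (by omega)
          have e2 : (ℐ.filter (· ⊆ A₂)).card = 2 * A₂.card - 1 := ih A₂ hA₂ (by omega)
          rw [hset, card_union_of_disjoint hdA, card_union_of_disjoint hd12,
            card_singleton, e1, e2]
          omega
        · -- card A = 1
          have h1' : A.card = 1 := le_antisymm h1 (hne A hA).card_pos
          have : ℐ.filter (· ⊆ A) = {A} := by
            apply Finset.eq_singleton_iff_unique_mem.mpr
            refine ⟨mem_filter.mpr ⟨hA, subset_rfl⟩, ?_⟩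
            intro C hC
            rw [mem_filter] at hC
            exact eq_of_subset_of_card_le hC.2 (by
              have := (hne C hC.1).card_pos; omega)
          rw [this, card_singleton, h1']
    intro A hA
    exact key A.card A hA le_rfl
  · intro hcnt A hA hAcard
    by_contra hno
    push_neg at hno
    obtain ⟨e, he⟩ := hne A hA
    have hsA : ({e} : Finset α) ⊂ A := by
      refine Finset.ssubset_iff_subset_ne.mpr ⟨singleton_subset_iff.mpr he, ?_⟩
      intro h
      rw [← h] at hAcard
      simp at hAcard
    have hfe : (ℐ.filter (· ⊂ A)).Nonempty :=
      ⟨{e}, mem_filter.mpr ⟨hbend.2.1 e, hsA⟩⟩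
    obtain ⟨B, hBmem, hBmax⟩ := exists_max_image _ Finset.card hfe
    have hBmem' := hBmem
    rw [mem_filter] at hBmem'
    obtain ⟨hBI, hBA⟩ := hBmem'
    have hb1 : 1 ≤ B.card := (hne B hBI).card_pos
    have hblt : B.card < A.card := card_lt_card hBA
    have hsd : (A \ B).card = A.card - B.card := card_sdiff_of_subset hBA.subset
    have hsub := max_member_split hbend hBI hBmax
    have h1 : (ℐ.filter (· ⊆ B)).card ≤ 2 * B.card - 1 := by
      have := card_le_card (filter_subset_insert ℐ B)
      have h2 := ssubset_count_le hbend B.card B le_rfl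
      have := card_insert_le B (ℐ.filter (· ⊂ B))
      omega
    have h2 : (ℐ.filter (· ⊆ A \ B)).card ≤ 2 * (A \ B).card - 2 := by
      have hss : ℐ.filter (· ⊆ A \ B) ⊆ ℐ.filter (· ⊂ (A \ B)) := by
        intro C hC
        rw [mem_filter] at hC ⊢
        refine ⟨hC.1, Finset.ssubset_iff_subset_ne.mpr ⟨hC.2, ?_⟩⟩
        intro hCeq
        -- C = A \ B gives a split of A: contradiction
        refine hno B hBI C hC.1 ?_ ?_
        · rw [hCeq]
          exact inter_sdiff_self _ _
        · rw [hCeq, union_sdiff_of_subset hBA.subset]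
      have := card_le_card hss
      have h3 := ssubset_count_le hbend (A \ B).card (A \ B) le_rfl
      omega
    have htot : (ℐ.filter (· ⊂ A)).card ≤
        (ℐ.filter (· ⊆ B)).card + (ℐ.filter (· ⊆ A \ B)).card :=
      le_trans (card_le_card hsub) (card_union_le _ _)
    have hAcount := hcnt A hA
    have hAin : (ℐ.filter (· ⊆ A)).card ≤ 1 + (ℐ.filter (· ⊂ A)).card := by
      have := card_le_card (filter_subset_insert ℐ A)
      have := card_insert_le A (ℐ.filter (· ⊂ A))
      omega
    omega
end

section
/- For every bending set I on E there exists a full bending set Î with I ⊆ Î and with the same set of maximal elements: M_Î = M_I. -/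
open Finset

/-- Splitting construction: every non-singleton member `A` of a bending set can be
split as `A = A₁ ∪ B` with `B ∈ ℐ`, `A₁` lopsided and compatible with everything. -/
lemma split_step {α : Type*} [Fintype α] [DecidableEq α]
    (lam : α → ℝ) (hpos : ∀ e : α, 0 < lam e)
    (ℐ : Finset (Finset α)) (hbend : IsBendingSet lam ℐ)
    (A : Finset α) (hA : A ∈ ℐ) (hcard : 1 < A.card) :
    ∃ A₁ B : Finset α, B ∈ ℐ ∧ A₁ ∩ B = ∅ ∧ A = A₁ ∪ B ∧ Lopsided lam A₁ ∧
      A₁ ⊆ A ∧ A₁ ≠ A ∧ ∀ C ∈ ℐ, A₁ ∩ C = ∅ ∨ A₁ ⊆ C ∨ C ⊆ A₁ := by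
  classical
  obtain ⟨hlop, hsing, hlam⟩ := hbend
  obtain ⟨e₀, he₀A, he₀⟩ := hlop A hA
  -- P : proper members containing e₀
  set P := ℐ.filter (fun C => C ⊆ A ∧ e₀ ∈ C ∧ C ≠ A) with hPdef
  have hPne : P.Nonempty := by
    refine ⟨{e₀}, ?_⟩
    simp only [hPdef, mem_filter]
    refine ⟨hsing e₀, singleton_subset_iff.mpr he₀A, mem_singleton_self e₀, ?_⟩
    intro h
    rw [← h] at hcard
    simp at hcard
  obtain ⟨B₀, hB₀P, hB₀max⟩ := P.exists_max_image Finset.card hPne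
  rw [hPdef, mem_filter] at hB₀P
  obtain ⟨hB₀mem, hB₀A, he₀B₀, hB₀ne⟩ := hB₀P
  obtain ⟨x, hxA, hxB₀⟩ := exists_of_ssubset (Finset.ssubset_iff_subset_ne.mpr ⟨hB₀A, hB₀ne⟩)
  have hxe₀ : x ≠ e₀ := fun h => hxB₀ (h ▸ he₀B₀)
  -- Q : proper members containing x
  set Q := ℐ.filter (fun C => C ⊆ A ∧ x ∈ C ∧ C ≠ A) with hQdef
  have hQne : Q.Nonempty := by
    refine ⟨{x}, ?_⟩
    simp only [hQdef, mem_filter]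
    refine ⟨hsing x, singleton_subset_iff.mpr hxA, mem_singleton_self x, ?_⟩
    intro h
    rw [← h] at he₀A
    exact hxe₀ (mem_singleton.mp he₀A).symm
  obtain ⟨B, hBQ, hBmax⟩ := Q.exists_max_image Finset.card hQne
  rw [hQdef, mem_filter] at hBQ
  obtain ⟨hBmem, hBA, hxB, hBne⟩ := hBQ
  -- e₀ ∉ B
  have he₀B : e₀ ∉ B := by
    intro he₀B
    rcases hlam B hBmem B₀ hB₀mem with hd | hs | hs
    · exact absurd hd (by simp [Finset.eq_empty_iff_forall_notMem]; exact ⟨e₀, he₀B, he₀B₀⟩)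
    · exact hxB₀ (hs hxB)
    · have hBP : B ∈ P := by
        rw [hPdef, mem_filter]; exact ⟨hBmem, hBA, he₀B, hBne⟩
      have := hB₀max B hBP
      have hEq : B₀ = B := eq_of_subset_of_card_le hs this
      exact hxB₀ (hEq ▸ hxB)
  refine ⟨A \ B, B, hBmem, sdiff_inter_self B A, (sdiff_union_of_subset hBA).symm, ?_, sdiff_subset, ?_, ?_⟩
  · -- Lopsided (A \ B)
    refine ⟨e₀, mem_sdiff.mpr ⟨he₀A, he₀B⟩, lt_of_le_of_lt ?_ he₀⟩
    apply sum_le_sum_of_subset_of_nonneg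
    · exact erase_subset_erase _ (sdiff_subset)
    · intro i _ _; exact (hpos i).le
  · -- A \ B ≠ A
    intro h
    have : x ∈ A \ B := h.symm ▸ hxA
    exact (mem_sdiff.mp this).2 hxB
  · -- compatibility
    intro C hC
    rcases hlam A hA C hC with hd | hs | hs
    · left
      apply subset_empty.mp
      rw [← hd]
      exact inter_subset_inter sdiff_subset Subset.rfl
    · right; left; exact sdiff_subset.trans hs
    · by_cases hCA : C = A
      · right; left; exact hCA ▸ sdiff_subset
      · rcases hlam C hC B hBmem with hd | hs' | hs'
        · right; right
          intro y hy
          refine mem_sdiff.mpr ⟨hs hy, fun hyB => ?_⟩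
          have : y ∈ C ∩ B := mem_inter.mpr ⟨hy, hyB⟩
          simp [hd] at this
        · left
          apply subset_empty.mp
          intro y hy
          rw [mem_inter] at hy
          exact absurd (hs' hy.2) (mem_sdiff.mp hy.1).2
        · have hCQ : C ∈ Q := by
            rw [hQdef, mem_filter]; exact ⟨hC, hs, hs' hxB, hCA⟩
          have hEq : B = C := eq_of_subset_of_card_le hs' (hBmax C hCQ)
          left
          rw [← hEq, inter_comm]
          exact inter_sdiff_self B A

lemma filter_insert_max_eq {α : Type*} [DecidableEq α] (ℐ : Finset (Finset α))
    (A A₁ : Finset α) (hA : A ∈ ℐ) (hsub : A₁ ⊆ A) (hne : A₁ ≠ A) :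
    (insert A₁ ℐ).filter (fun X => ∀ B ∈ insert A₁ ℐ, X ⊆ B → X = B) =
      ℐ.filter (fun X => ∀ B ∈ ℐ, X ⊆ B → X = B) := by
  classical
  ext X
  simp only [mem_filter, mem_insert]
  constructor
  · rintro ⟨hX | hX, hmax⟩
    · exact absurd (hmax A (Or.inr hA) (hX ▸ hsub)) (hX ▸ hne)
    · exact ⟨hX, fun B hB h => hmax B (Or.inr hB) h⟩
  · rintro ⟨hX, hmax⟩
    refine ⟨Or.inr hX, ?_⟩
    rintro B (rfl | hB) h
    · have hXA : X = A := hmax A hA (h.trans hsub)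
      have hAB : A ⊆ B := by rw [← hXA]; exact h
      exact absurd (Subset.antisymm hsub hAB) hne
    · exact hmax B hB h

lemma bending_aux {α : Type*} [Fintype α] [DecidableEq α]
    (lam : α → ℝ) (hpos : ∀ e : α, 0 < lam e) :
    ∀ n : ℕ, ∀ ℐ : Finset (Finset α), IsBendingSet lam ℐ →
      Fintype.card (Finset α) ≤ ℐ.card + n →
      ∃ ℐ' : Finset (Finset α), ℐ ⊆ ℐ' ∧ IsBendingSet lam ℐ' ∧ IsFull ℐ' ∧
        ℐ'.filter (fun A => ∀ B ∈ ℐ', A ⊆ B → A = B) =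
          ℐ.filter (fun A => ∀ B ∈ ℐ, A ⊆ B → A = B) := by
  intro n
  induction n with
  | zero =>
    intro ℐ hbend hbound
    have hcard : ℐ.card = Fintype.card (Finset α) :=
      le_antisymm (card_le_univ ℐ) (by simpa using hbound)
    have huniv : ℐ = Finset.univ := eq_univ_of_card ℐ hcard
    refine ⟨ℐ, Subset.rfl, hbend, ?_, rfl⟩
    intro A hA hAcard
    obtain ⟨A₁, B, hB, hdisj, hunion, _, _, _, _⟩ :=
      split_step lam hpos ℐ hbend A hA hAcard
    exact ⟨A₁, huniv ▸ mem_univ A₁, B, hB, hdisj, hunion⟩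
  | succ n ih =>
    intro ℐ hbend hbound
    by_cases hfull : IsFull ℐ
    · exact ⟨ℐ, Subset.rfl, hbend, hfull, rfl⟩
    · rw [IsFull] at hfull
      push_neg at hfull
      obtain ⟨A, hA, hAcard, hno⟩ := hfull
      obtain ⟨A₁, B, hB, hdisj, hunion, hlopA₁, hA₁sub, hA₁ne, hcompat⟩ :=
        split_step lam hpos ℐ hbend A hA hAcard
      have hA₁notmem : A₁ ∉ ℐ := by
        intro hmem
        exact hno A₁ hmem B hB hdisj hunion
      obtain ⟨hlop, hsing, hlam⟩ := hbend
      have hbend₂ : IsBendingSet lam (insert A₁ ℐ) := by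
        refine ⟨?_, ?_, ?_⟩
        · rintro C hC
          rcases mem_insert.mp hC with rfl | hC
          · exact hlopA₁
          · exact hlop C hC
        · intro e; exact mem_insert_of_mem (hsing e)
        · intro C hC D hD
          rcases mem_insert.mp hC with rfl | hC' <;> rcases mem_insert.mp hD with rfl | hD'
          · right; left; exact Subset.rfl
          · exact hcompat D hD'
          · rcases hcompat C hC' with hd | hs | hs
            · left; rw [inter_comm]; exact hd
            · right; right; exact hs
            · right; left; exact hs
          · exact hlam C hC' D hD'
      have hcard₂ : (insert A₁ ℐ).card = ℐ.card + 1 := card_insert_of_notMem hA₁notmem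
      obtain ⟨ℐ', hsub', hbend', hfull', hfilt'⟩ :=
        ih (insert A₁ ℐ) hbend₂ (by omega)
      refine ⟨ℐ', (subset_insert A₁ ℐ).trans hsub', hbend', hfull', ?_⟩
      rw [hfilt']
      ext X
      simp only [mem_filter, mem_insert]
      constructor
      · rintro ⟨hX | hX, hmax⟩
        · exact absurd (hmax A (Or.inr hA) (hX ▸ hA₁sub)) (hX ▸ hA₁ne)
        · exact ⟨hX, fun B' hB' h => hmax B' (Or.inr hB') h⟩
      · rintro ⟨hX, hmax⟩
        refine ⟨Or.inr hX, ?_⟩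
        rintro B' (rfl | hB') h
        · have hXA : X = A := hmax A hA (h.trans hA₁sub)
          have hAB : A ⊆ B' := by rw [← hXA]; exact h
          exact absurd (Subset.antisymm hA₁sub hAB) hA₁ne
        · exact hmax B' hB' h

/-- Every bending set is contained in a full bending set with the same
maximal elements. -/
theorem exists_full_bending_set {α : Type*} [Fintype α] [DecidableEq α]
    (lam : α → ℝ) (hpos : ∀ e : α, 0 < lam e)
    (ℐ : Finset (Finset α)) (hbend : IsBendingSet lam ℐ) :
    ∃ ℐ' : Finset (Finset α), ℐ ⊆ ℐ' ∧ IsBendingSet lam ℐ' ∧ IsFull ℐ' ∧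
      ℐ'.filter (fun A => ∀ B ∈ ℐ', A ⊆ B → A = B) =
        ℐ.filter (fun A => ∀ B ∈ ℐ, A ⊆ B → A = B) := by
  exact bending_aux lam hpos (Fintype.card (Finset α)) ℐ hbend (Nat.le_add_left _ _)
end

section
/- Let I be a bending set on E and let J₀ be a partition of E into lopsided subsets that is coarser than M_I. Then J := J₀ ∪ I is a bending set, and M_J = J₀. -/
open Finset

/-- `P` is a partition of the finite set `α` into lopsided subsets. -/
def LopsidedPartition {α : Type*} [Fintype α] [DecidableEq α]
    (lam : α → ℝ) (P : Finset (Finset α)) : Prop :=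
  (∀ A ∈ P, Lopsided lam A) ∧
    (∀ A ∈ P, ∀ B ∈ P, A ≠ B → A ∩ B = ∅) ∧
    P.biUnion id = Finset.univ

/-- If `ℐ` is a bending set and `𝒥₀` is a partition of `E` into lopsided subsets
coarser than the partition `M_ℐ` of maximal elements of `ℐ`, then `𝒥₀ ∪ ℐ` is a
bending set whose maximal elements are exactly the members of `𝒥₀`. -/
theorem union_partition_bending_set {α : Type*} [Fintype α] [DecidableEq α]
    (lam : α → ℝ) (hpos : ∀ e : α, 0 < lam e)
    (ℐ : Finset (Finset α)) (hbend : IsBendingSet lam ℐ)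
    (𝒥₀ : Finset (Finset α)) (hpart : LopsidedPartition lam 𝒥₀)
    (hcoarse : ∀ B ∈ 𝒥₀,
      B = ((ℐ.filter (fun A => ∀ C ∈ ℐ, A ⊆ C → A = C)).filter (· ⊆ B)).biUnion id) :
    IsBendingSet lam (𝒥₀ ∪ ℐ) ∧
    (𝒥₀ ∪ ℐ).filter (fun A => ∀ C ∈ 𝒥₀ ∪ ℐ, A ⊆ C → A = C) = 𝒥₀ := by
  obtain ⟨hlop, hsing, hcomp⟩ := hbend
  obtain ⟨hlopP, hdisj, hcover⟩ := hpart
  have hne : ∀ A : Finset α, Lopsided lam A → A.Nonempty := by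
    rintro A ⟨e₀, he₀, -⟩; exact ⟨e₀, he₀⟩
  -- every element of ℐ is contained in an inclusion-maximal element of ℐ
  have hmax : ∀ A ∈ ℐ, ∃ C ∈ ℐ, A ⊆ C ∧ ∀ D ∈ ℐ, C ⊆ D → C = D := by
    intro A hA
    obtain ⟨C, hC, hCmax⟩ := (ℐ.filter (A ⊆ ·)).exists_maximal
      ⟨A, mem_filter.mpr ⟨hA, subset_rfl⟩⟩
    rw [mem_filter] at hC
    refine ⟨C, hC.1, hC.2, fun D hD hCD => by_contra fun hne' => ?_⟩
    exact hne' (Subset.antisymm hCD (hCmax (mem_filter.mpr ⟨hD, hC.2.trans hCD⟩) hCD))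
  -- key: every element of ℐ is contained in some block of 𝒥₀
  have hkey : ∀ A ∈ ℐ, ∃ B ∈ 𝒥₀, A ⊆ B := by
    intro A hA
    obtain ⟨C, hC, hAC, hCmax⟩ := hmax A hA
    obtain ⟨e₀, he₀⟩ := hne C (hlop C hC)
    have he₀' : e₀ ∈ 𝒥₀.biUnion id := by rw [hcover]; exact mem_univ e₀
    obtain ⟨B, hB, he₀B⟩ := mem_biUnion.mp he₀'
    rw [hcoarse B hB] at he₀B
    obtain ⟨D, hD, he₀D⟩ := mem_biUnion.mp he₀B
    simp only [mem_filter] at hD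
    obtain ⟨⟨hDI, hDmax⟩, hDB⟩ := hD
    simp only [id_eq] at he₀D
    rcases hcomp C hC D hDI with hdis | hCD | hDC
    · exact absurd (mem_inter.mpr ⟨he₀, he₀D⟩) (by rw [hdis]; exact notMem_empty e₀)
    · exact ⟨B, hB, hAC.trans (hCD.trans hDB)⟩
    · exact ⟨B, hB, hAC.trans ((hDmax C hC hDC) ▸ hDB)⟩
  have hJ₀ne : ∀ B ∈ 𝒥₀, B.Nonempty := fun B hB => hne B (hlopP B hB)
  constructor
  · refine ⟨?_, ?_, ?_⟩
    · intro A hA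
      rcases mem_union.mp hA with h | h
      exacts [hlopP A h, hlop A h]
    · intro e; exact mem_union_right _ (hsing e)
    · intro A hA B hB
      rcases mem_union.mp hA with hA' | hA' <;> rcases mem_union.mp hB with hB' | hB'
      · by_cases h : A = B
        · right; left; exact h ▸ subset_rfl
        · left; exact hdisj A hA' B hB' h
      · obtain ⟨B', hB'', hBB'⟩ := hkey B hB'
        by_cases h : A = B'
        · right; right; exact h ▸ hBB'
        · left
          have hd := hdisj A hA' B' hB'' h
          exact subset_empty.mp (hd ▸ inter_subset_inter subset_rfl hBB')
      · obtain ⟨A', hA'', hAA'⟩ := hkey A hA'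
        by_cases h : A' = B
        · right; left; exact h ▸ hAA'
        · left
          have hd := hdisj A' hA'' B hB' h
          exact subset_empty.mp (hd ▸ inter_subset_inter hAA' subset_rfl)
      · exact hcomp A hA' B hB'
  · ext A
    simp only [mem_filter, mem_union]
    constructor
    · rintro ⟨hA, hAmax⟩
      have : ∃ B ∈ 𝒥₀, A ⊆ B := by
        rcases hA with h | h
        · exact ⟨A, h, subset_rfl⟩
        · exact hkey A h
      obtain ⟨B, hB, hAB⟩ := this
      have := hAmax B (Or.inl hB) hAB
      exact this ▸ hB
    · intro hA
      refine ⟨Or.inl hA, fun C hC hBC => ?_⟩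
      rcases hC with hC' | hC'
      · by_contra h
        have hd := hdisj A hA C hC' h
        obtain ⟨e, he⟩ := hJ₀ne A hA
        exact absurd (mem_inter.mpr ⟨he, hBC he⟩) (by rw [hd]; exact notMem_empty e)
      · obtain ⟨B', hB', hCB'⟩ := hkey C hC'
        have hAB' : A ⊆ B' := hBC.trans hCB'
        have hAeq : A = B' := by
          by_contra h
          have hd := hdisj A hA B' hB' h
          obtain ⟨e, he⟩ := hJ₀ne A hA
          exact absurd (mem_inter.mpr ⟨he, hAB' he⟩) (by rw [hd]; exact notMem_empty e)
        exact Subset.antisymm hBC (hAeq ▸ hCB')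
end
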